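/- arXiv:2205.01328 — 5 statements merged into one kernel-verified Lean document; each statement's English description precedes it below -/
import Mathlib

section
/- For any square matrix A of size N over the complex numbers, the permanent of A equals (-1)^N times the sum over all subsets S of {1,...,N} of (-1)^{|S|} times the product over j from 1 to N of the sum over k in S of A_{jk} (Ryser's formula). -/
/-!
Expanding the product, `∏ j, ∑ k ∉ t, A j k` is the sum of `∏ j, A j (f j)` over all maps
`f : n → n` whose range avoids `t`. The permanent is the same sum over the surjective maps, i.e.
over the maps avoiding no value, so inclusion–exclusion over the set of avoided values gives
`perm A = ∑ t, (-1)^|t| ∏ j, ∑ k ∉ t, A j k`. Substituting `S = tᶜ` yields Ryser's formula.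
-/

open Finset BigOperators

/-- The permanent of a square matrix. -/
noncomputable def perm {n : Type*} [Fintype n] [DecidableEq n] (A : Matrix n n ℂ) : ℂ :=
  ∑ σ : Equiv.Perm n, ∏ j, A j (σ j)

variable {n : Type*} [Fintype n] [DecidableEq n]

lemma sum_perm_eq_sum_of_mem_iff_surjective {M : Type*} [AddCommMonoid M] {s : Finset (n → n)}
    (hs : ∀ f, f ∈ s ↔ f.Surjective) (g : (n → n) → M) :
    ∑ σ : Equiv.Perm n, g σ = ∑ f ∈ s, g f := by
  refine sum_nbij' (⇑) (fun f => if hf : f.Surjective then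
      Equiv.ofBijective f (Finite.surjective_iff_bijective.mp hf) else 1) ?_ ?_ ?_ ?_ ?_
  · intro σ _; simpa [hs] using σ.surjective
  · intro f _; simp
  · intro σ _; ext; simp [σ.surjective]
  · intro f hf; simp_all
  · intro σ _; rfl

def avoiding (k : n) : Finset (n → n) := {f | ∀ j, f j ≠ k}

lemma inf_avoiding (t : Finset n) : t.inf avoiding = Fintype.piFinset fun _ => tᶜ := by
  ext f
  simp only [mem_inf, avoiding, mem_filter_univ, Fintype.mem_piFinset, mem_compl]
  exact ⟨fun h j hj => h _ hj j rfl, fun h i hi j hji => h j (hji ▸ hi)⟩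

lemma mem_inf_compl_avoiding {f : n → n} :
    f ∈ univ.inf (fun k => (avoiding k)ᶜ) ↔ f.Surjective := by
  simp [mem_inf, avoiding, Function.Surjective]

theorem perm_eq_sum_neg_one_pow_card_mul_prod_sum_compl (A : Matrix n n ℂ) :
    perm A = ∑ t : Finset n, (-1) ^ #t * ∏ j, ∑ k ∈ tᶜ, A j k := by
  rw [perm, sum_perm_eq_sum_of_mem_iff_surjective (fun _ => mem_inf_compl_avoiding)
    (fun f => ∏ j, A j (f j)), inclusion_exclusion_sum_inf_compl]
  simp only [powerset_univ, inf_avoiding, zsmul_eq_mul, Int.cast_pow, Int.cast_neg, Int.cast_one]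
  exact sum_congr rfl fun t _ => by rw [prod_univ_sum (fun _ => tᶜ) fun j k => A j k]

lemma neg_one_pow_card_eq_mul_neg_one_pow_card_compl {R : Type*} [Monoid R] [HasDistribNeg R]
    (t : Finset n) : (-1 : R) ^ #t = (-1) ^ Fintype.card n * (-1) ^ #tᶜ := by
  rw [← card_add_card_compl t, pow_add, mul_assoc, ← pow_add, ← two_mul, pow_mul, neg_one_sq,
    one_pow, mul_one]

theorem perm_eq_ryser (A : Matrix n n ℂ) :
    perm A = (-1) ^ Fintype.card n * ∑ S : Finset n, (-1) ^ #S * ∏ j, ∑ k ∈ S, A j k := by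
  rw [perm_eq_sum_neg_one_pow_card_mul_prod_sum_compl, mul_sum]
  refine Fintype.sum_bijective compl compl_involutive.bijective _ _ fun t => ?_
  rw [neg_one_pow_card_eq_mul_neg_one_pow_card_compl t, mul_assoc]

theorem ryser_formula_general (N : ℕ) (A : Matrix (Fin N) (Fin N) ℂ) :
    perm A =
      (-1 : ℂ) ^ N *
        ∑ S : Finset (Fin N), (-1 : ℂ) ^ S.card * ∏ j : Fin N, ∑ k ∈ S, A j k := by
  rw [perm_eq_ryser, Fintype.card_fin]

/-- Ryser's formula for the permanent. -/
theorem ryser_formula (N : ℕ) (hN : 1 ≤ N) (A : Matrix (Fin N) (Fin N) ℂ) :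
    perm A =
      (-1 : ℂ) ^ N *
        ∑ S : Finset (Fin N), (-1 : ℂ) ^ S.card * ∏ j : Fin N, ∑ k ∈ S, A j k :=
  ryser_formula_general N A
end

section
/- For any N×N complex matrix A with N ≥ 1, Per(A) = 2^{-N} Σ_{x ∈ {-1,1}^N} (Π_{k=1}^N x_k)(Π_{j=1}^N Σ_{k=1}^N A_{jk} x_k) (Glynn's formula). -/
/-!
Expanding `∏ j, ∑ k, A j k * x k` over all maps `f : ι → ι` turns the right-hand side into
`∑ f, (∏ j, A j (f j)) * ∑ x, (∏ k, x k) * ∏ j, x (f j)`. For a bijection `f` the inner summand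
is `∏ k, (x k)^2 = 1`, so the inner sum is `2 ^ N`; otherwise some `k` lies outside the range
of `f`, and flipping `x k` negates the summand, so the inner sum vanishes. Only permutations
survive, each with weight `2 ^ N`.
-/

open Finset BigOperators

/-- A sign vector `x ∈ {-1,1}^N`, encoded by a Boolean vector. -/
def sgn (b : Bool) : ℂ := if b then 1 else -1

lemma sgn_not (b : Bool) : sgn (!b) = -sgn b := by
  cases b <;> simp [sgn]

lemma sgn_mul_self (b : Bool) : sgn b * sgn b = 1 := by
  cases b <;> simp [sgn]

section

variable {ι : Type*} [Fintype ι] [DecidableEq ι]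

lemma prod_sgn_update_not (x : ι → Bool) (k : ι) :
    ∏ i, sgn (Function.update x k (!x k) i) = -∏ i, sgn (x i) := by
  rw [Fintype.prod_eq_mul_prod_compl k, Fintype.prod_eq_mul_prod_compl k (fun i => sgn (x i)),
    Function.update_self, sgn_not, neg_mul]
  congr 2
  refine prod_congr rfl fun i hi => ?_
  rw [Function.update_of_ne (by simpa using hi)]

lemma sum_prod_sgn_mul_prod_sgn_comp_of_bijective {f : ι → ι} (hf : f.Bijective) :
    ∑ x : ι → Bool, (∏ k, sgn (x k)) * ∏ j, sgn (x (f j)) = 2 ^ Fintype.card ι := by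
  calc ∑ x : ι → Bool, (∏ k, sgn (x k)) * ∏ j, sgn (x (f j))
      = ∑ _x : ι → Bool, (1 : ℂ) := sum_congr rfl fun x _ => by
        rw [hf.prod_comp fun k => sgn (x k), ← prod_mul_distrib]
        simp only [sgn_mul_self, prod_const_one]
    _ = 2 ^ Fintype.card ι := by simp

lemma sum_prod_sgn_mul_prod_sgn_comp_of_forall_ne {f : ι → ι} {k : ι} (hk : ∀ j, f j ≠ k) :
    ∑ x : ι → Bool, (∏ k, sgn (x k)) * ∏ j, sgn (x (f j)) = 0 := by
  set flip : (ι → Bool) → ι → Bool := fun x => Function.update x k (!x k)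
  have hflip : Function.Involutive flip := fun x => by simp [flip]
  have hflip_f : ∀ x j, flip x (f j) = x (f j) := fun x j => Function.update_of_ne (hk j) _ _
  rw [← self_eq_neg, ← sum_neg_distrib]
  refine (Equiv.sum_comp hflip.toPerm _).symm.trans (sum_congr rfl fun x _ => ?_)
  simp only [Function.Involutive.coe_toPerm, hflip_f, flip, prod_sgn_update_not, neg_mul]

lemma sum_prod_sgn_mul_prod_sgn_comp (f : ι → ι) :
    ∑ x : ι → Bool, (∏ k, sgn (x k)) * ∏ j, sgn (x (f j)) =
      if f.Bijective then 2 ^ Fintype.card ι else 0 := by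
  split_ifs with hf
  · exact sum_prod_sgn_mul_prod_sgn_comp_of_bijective hf
  · obtain ⟨k, hk⟩ : ∃ k, ∀ j, f j ≠ k := by
      simpa [Function.Surjective] using mt Finite.surjective_iff_bijective.mp hf
    exact sum_prod_sgn_mul_prod_sgn_comp_of_forall_ne hk

lemma sum_ite_bijective_eq_sum_perm {M : Type*} [AddCommMonoid M] (g : (ι → ι) → M) :
    ∑ f : ι → ι, (if f.Bijective then g f else 0) = ∑ σ : Equiv.Perm ι, g σ := by
  refine (Fintype.sum_of_injective (fun σ : Equiv.Perm ι => ⇑σ) DFunLike.coe_injective _ _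
    (fun f hf => ?_) fun σ => (if_pos (Equiv.bijective σ)).symm).symm
  rw [if_neg fun hbij => hf ⟨Equiv.ofBijective f hbij, rfl⟩]

lemma sum_prod_sgn_mul_prod_sum_mul_sgn (A : Matrix ι ι ℂ) :
    ∑ x : ι → Bool, (∏ k, sgn (x k)) * ∏ j, ∑ k, A j k * sgn (x k) =
      2 ^ Fintype.card ι * perm A := by
  calc ∑ x : ι → Bool, (∏ k, sgn (x k)) * ∏ j, ∑ k, A j k * sgn (x k)
      = ∑ x : ι → Bool, ∑ f : ι → ι, (∏ k, sgn (x k)) * ∏ j, A j (f j) * sgn (x (f j)) := by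
        simp only [Fintype.prod_sum, mul_sum]
    _ = ∑ f : ι → ι, (∏ j, A j (f j)) *
          ∑ x : ι → Bool, (∏ k, sgn (x k)) * ∏ j, sgn (x (f j)) := by
        rw [sum_comm]
        simp only [mul_sum, prod_mul_distrib, mul_left_comm]
    _ = ∑ f : ι → ι, (if f.Bijective then (∏ j, A j (f j)) * 2 ^ Fintype.card ι else 0) := by
        simp only [sum_prod_sgn_mul_prod_sgn_comp, mul_ite, mul_zero]
    _ = 2 ^ Fintype.card ι * perm A := by
        rw [sum_ite_bijective_eq_sum_perm, perm, ← sum_mul, mul_comm]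

end

theorem glynn_formula_general (N : ℕ) (A : Matrix (Fin N) (Fin N) ℂ) :
    perm A =
      (2 : ℂ) ^ (-(N : ℤ)) *
        ∑ x : Fin N → Bool,
          (∏ k : Fin N, sgn (x k)) * ∏ j : Fin N, ∑ k : Fin N, A j k * sgn (x k) := by
  rw [sum_prod_sgn_mul_prod_sum_mul_sgn, Fintype.card_fin, ← mul_assoc, zpow_neg, zpow_natCast,
    inv_mul_cancel₀ (pow_ne_zero N two_ne_zero), one_mul]

/-- Glynn's formula for the permanent. -/
theorem glynn_formula (N : ℕ) (hN : 1 ≤ N) (A : Matrix (Fin N) (Fin N) ℂ) :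
    perm A =
      (2 : ℂ) ^ (-(N : ℤ)) *
        ∑ x : Fin N → Bool,
          (∏ k : Fin N, sgn (x k)) * ∏ j : Fin N, ∑ k : Fin N, A j k * sgn (x k) :=
  glynn_formula_general N A
end

section
/- For any N×N complex matrix A with N ≥ 1, |Per(A)| ≤ (Σ_{j,k=1}^N |A_{jk}|)^N / N!. -/
open Finset BigOperators

/-!
Let `N = card n`. For `M ≥ 0`, expanding `(∑ i j, M i j) ^ N` gives a sum of nonnegative terms
`∏ i, M (g i).1 (g i).2`, one for each map `g : n → n × n`. Among them are the `(N!)²` distinct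
maps `i ↦ (ρ i, τ i)` with `ρ, τ` permutations, and for each fixed `τ` the terms over `ρ` add up to
the permanent of `M`; hence `N! * per M ≤ (∑ i j, M i j) ^ N`. For a complex matrix, apply this
to `|A i j|`.
-/

namespace Matrix

variable {n : Type*} [Fintype n] [DecidableEq n]

theorem norm_permanent_le_permanent_map_norm {R : Type*} [NormedCommRing R] [NormOneClass R]
    (M : Matrix n n R) : ‖M.permanent‖ ≤ (M.map (‖·‖)).permanent :=
  (norm_sum_le _ _).trans <| Finset.sum_le_sum fun _ _ => Finset.norm_prod_le _ _

theorem factorial_card_mul_permanent_le_sum_pow {R : Type*} [CommSemiring R] [PartialOrder R]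
    [IsOrderedRing R] (M : Matrix n n R) (hM : ∀ i j, 0 ≤ M i j) :
    ((Fintype.card n).factorial : R) * M.permanent ≤ (∑ i, ∑ j, M i j) ^ Fintype.card n := by
  set f : (n → n × n) → R := fun g => ∏ i, M (g i).1 (g i).2
  set pairing : Equiv.Perm n × Equiv.Perm n → (n → n × n) := fun x i => (x.1 i, x.2 i)
  have pairing_injective : Function.Injective pairing := fun x y h =>
    Prod.ext (Equiv.ext fun i => congrArg Prod.fst (congrFun h i))
      (Equiv.ext fun i => congrArg Prod.snd (congrFun h i))
  have permanent_eq (τ : Equiv.Perm n) : ∑ ρ : Equiv.Perm n, ∏ i, M (ρ i) (τ i) = M.permanent :=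
    permanent_permute_rows τ M
  calc ((Fintype.card n).factorial : R) * M.permanent
      = ∑ x : Equiv.Perm n × Equiv.Perm n, f (pairing x) := by
        simp only [Fintype.sum_prod_type_right, f, pairing, permanent_eq, sum_const,
          card_univ, Fintype.card_perm, nsmul_eq_mul]
    _ = ∑ g ∈ univ.image pairing, f g := (sum_image fun x _ y _ h => pairing_injective h).symm
    _ ≤ ∑ g, f g := sum_le_univ_sum_of_nonneg fun g => Finset.prod_nonneg fun i _ => hM _ _
    _ = ∏ _i : n, ∑ p : n × n, M p.1 p.2 :=
        (Fintype.prod_sum fun (_ : n) (p : n × n) => M p.1 p.2).symm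
    _ = (∑ p : n × n, M p.1 p.2) ^ Fintype.card n := by
        rw [prod_const, card_univ]
    _ = (∑ i, ∑ j, M i j) ^ Fintype.card n := by rw [Fintype.sum_prod_type]

end Matrix

theorem perm_abs_le_general (N : ℕ) (A : Matrix (Fin N) (Fin N) ℂ) :
    ‖perm A‖ ≤
      (∑ j : Fin N, ∑ k : Fin N, ‖A j k‖) ^ N / N.factorial := by
  have perm_eq_permanent : perm A = A.permanent := by rw [← Matrix.permanent_transpose]; rfl
  rw [perm_eq_permanent, le_div_iff₀ (by positivity), mul_comm]
  calc (N.factorial : ℝ) * ‖A.permanent‖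
      ≤ N.factorial * (A.map (‖·‖)).permanent := by
        gcongr
        exact A.norm_permanent_le_permanent_map_norm
    _ ≤ (∑ j, ∑ k, ‖A j k‖) ^ N := by
        simpa using
          (A.map (‖·‖)).factorial_card_mul_permanent_le_sum_pow fun i j => norm_nonneg (A i j)

/-- Bound on the magnitude of the permanent from the Glynn-Kan formula. -/
theorem perm_abs_le (N : ℕ) (hN : 1 ≤ N) (A : Matrix (Fin N) (Fin N) ℂ) :
    ‖perm A‖ ≤
      (∑ j : Fin N, ∑ k : Fin N, ‖A j k‖) ^ N / N.factorial :=
  perm_abs_le_general N A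
end

section
/- For any N×N real matrix B with N even, Per(B) = (1/(N! 2^{2N})) [Σ_{x,x'} S₊(x,x')(x'^T B x)^N − Σ_{x,x'} S₋(x,x')(x'^T B x)^N], where S_±(x,x') = (Π_k x_k ± Π_k x'_k)²/4, and both sums are over all pairs x, x' ∈ {-1,1}^N; moreover each summand S_±(x,x')(x'^T B x)^N is nonnegative. -/
open Finset BigOperators

/-- The permanent of a real square matrix. -/
noncomputable def permR {n : Type*} [Fintype n] [DecidableEq n] (B : Matrix n n ℝ) : ℝ :=
  ∑ σ : Equiv.Perm n, ∏ j, B j (σ j)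

/-- A sign `∈ {-1,1}`, encoded by a Boolean. -/
def sgnR (b : Bool) : ℝ := if b then 1 else -1

/-!
Writing `s x = ∏ₖ xₖ`, the difference `S₊ - S₋` is `s x * s x'`. Averaging `s x` against a
product of linear forms `∏ⱼ (∑ₖ cⱼₖ xₖ)` over `x ∈ {-1,1}ⁿ` kills every monomial in which some
variable is missing, and what survives is `2ⁿ Per(c)`. Applied in `x'` to the power
`(x'ᵀ B x)ᴺ`, a product of `N` equal linear forms, this gives `2ᴺ N! ∏ⱼ (B x)ⱼ`; applied once more
in `x` it gives `2ᴺ N! 2ᴺ Per(B)`.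
-/

section SignSums

variable {n : Type*} [Fintype n] [DecidableEq n]

theorem sgnR_mul_self (b : Bool) : sgnR b * sgnR b = 1 := by
  cases b <;> norm_num [sgnR]

theorem sum_prod_sgnR_pow (m : n → ℕ) :
    ∑ x : n → Bool, ∏ k, sgnR (x k) ^ m k = ∏ k, ((-1) ^ m k + 1) := by
  rw [← Fintype.prod_sum fun k (b : Bool) => sgnR b ^ m k]
  simp [sgnR, add_comm]

theorem prod_sgnR_comp (x : n → Bool) (g : n → n) :
    ∏ j, sgnR (x (g j)) = ∏ k, sgnR (x k) ^ #{j | g j = k} := by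
  rw [← prod_fiberwise univ g]
  refine prod_congr rfl fun k _ => ?_
  rw [prod_congr rfl fun j hj => by rw [(mem_filter.1 hj).2], prod_const]

theorem sum_prod_sgnR_mul_prod_sgnR_perm (σ : Equiv.Perm n) :
    ∑ x : n → Bool, (∏ k, sgnR (x k)) * ∏ j, sgnR (x (σ j)) = 2 ^ Fintype.card n := by
  have hsquare : ∀ x : n → Bool, (∏ k, sgnR (x k)) * ∏ j, sgnR (x (σ j)) = 1 := fun x => by
    rw [Equiv.prod_comp σ fun k => sgnR (x k), ← prod_mul_distrib]
    exact prod_eq_one fun k _ => sgnR_mul_self (x k)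
  simp [hsquare]

theorem sum_prod_sgnR_mul_prod_sgnR_comp_of_not_surjective {g : n → n}
    (hg : ¬ Function.Surjective g) :
    ∑ x : n → Bool, (∏ k, sgnR (x k)) * ∏ j, sgnR (x (g j)) = 0 := by
  obtain ⟨k, hk⟩ : ∃ k, ∀ j, g j ≠ k := by simpa [Function.Surjective] using hg
  have hfiber : #{j | g j = k} = 0 :=
    card_eq_zero.2 (filter_eq_empty_iff.2 fun j _ => hk j)
  simp_rw [prod_sgnR_comp _ g, ← prod_mul_distrib, ← pow_succ']
  rw [sum_prod_sgnR_pow]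
  exact prod_eq_zero (mem_univ k) (by norm_num [hfiber])

theorem sum_prod_sgnR_mul_prod_sum (c : Matrix n n ℝ) :
    ∑ x : n → Bool, (∏ k, sgnR (x k)) * ∏ j, ∑ k, c j k * sgnR (x k) =
      2 ^ Fintype.card n * permR c := by
  have hexpand : ∀ x : n → Bool, (∏ k, sgnR (x k)) * ∏ j, ∑ k, c j k * sgnR (x k) =
      ∑ g : n → n, (∏ j, c j (g j)) * ((∏ k, sgnR (x k)) * ∏ j, sgnR (x (g j))) := by
    intro x
    rw [Fintype.prod_sum, mul_sum]
    exact sum_congr rfl fun g _ => by rw [prod_mul_distrib]; ring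
  simp_rw [hexpand]
  rw [sum_comm, permR, mul_sum]
  refine (Fintype.sum_of_injective (fun σ : Equiv.Perm n => ⇑σ) DFunLike.coe_injective _ _
    (fun g hg => ?_) fun σ => ?_).symm
  · have hsurj : ¬ Function.Surjective g := fun hs =>
      hg ⟨Equiv.ofBijective g (Finite.surjective_iff_bijective.1 hs), rfl⟩
    rw [← mul_sum, sum_prod_sgnR_mul_prod_sgnR_comp_of_not_surjective hsurj, mul_zero]
  · rw [← mul_sum, sum_prod_sgnR_mul_prod_sgnR_perm, mul_comm]

theorem permR_replicateRow (v : n → ℝ) :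
    permR (Matrix.replicateRow n v) = (Fintype.card n).factorial * ∏ j, v j := by
  simp [permR, Equiv.prod_comp, Fintype.card_perm]

theorem sum_prod_sgnR_mul_sum_pow_card (v : n → ℝ) :
    ∑ x : n → Bool, (∏ k, sgnR (x k)) * (∑ j, v j * sgnR (x j)) ^ Fintype.card n =
      2 ^ Fintype.card n * ((Fintype.card n).factorial * ∏ j, v j) := by
  rw [← permR_replicateRow, ← sum_prod_sgnR_mul_prod_sum]
  simp [Matrix.replicateRow_apply]

theorem sum_sum_prod_sgnR_mul_bilinear_pow (B : Matrix n n ℝ) :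
    ∑ x : n → Bool, ∑ x' : n → Bool, (∏ k, sgnR (x k)) * (∏ k, sgnR (x' k)) *
        (∑ j, ∑ k, sgnR (x' j) * B j k * sgnR (x k)) ^ Fintype.card n =
      (Fintype.card n).factorial * 2 ^ (2 * Fintype.card n) * permR B := by
  have hbilinear : ∀ x x' : n → Bool, ∑ j, ∑ k, sgnR (x' j) * B j k * sgnR (x k) =
      ∑ j, (∑ k, B j k * sgnR (x k)) * sgnR (x' j) := fun x x' =>
    sum_congr rfl fun j _ => by rw [sum_mul]; exact sum_congr rfl fun k _ => by ring
  simp_rw [hbilinear, mul_assoc, ← mul_sum, sum_prod_sgnR_mul_sum_pow_card]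
  calc ∑ x : n → Bool, (∏ k, sgnR (x k)) *
        (2 ^ Fintype.card n * ((Fintype.card n).factorial * ∏ j, ∑ k, B j k * sgnR (x k)))
      = 2 ^ Fintype.card n * (Fintype.card n).factorial *
          ∑ x : n → Bool, (∏ k, sgnR (x k)) * ∏ j, ∑ k, B j k * sgnR (x k) := by
        rw [mul_sum]; exact sum_congr rfl fun x _ => by ring
    _ = _ := by rw [sum_prod_sgnR_mul_prod_sum]; ring

end SignSums

theorem perm_gap_formula_general (N : ℕ) (hN : Even N) (B : Matrix (Fin N) (Fin N) ℝ) :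
    permR B =
      (1 / ((N.factorial : ℝ) * 2 ^ (2 * N))) *
        ((∑ x : Fin N → Bool, ∑ x' : Fin N → Bool,
            (((∏ k : Fin N, sgnR (x k)) + ∏ k : Fin N, sgnR (x' k)) ^ 2 / 4) *
              (∑ j : Fin N, ∑ k : Fin N, sgnR (x' j) * B j k * sgnR (x k)) ^ N) -
          ∑ x : Fin N → Bool, ∑ x' : Fin N → Bool,
            (((∏ k : Fin N, sgnR (x k)) - ∏ k : Fin N, sgnR (x' k)) ^ 2 / 4) *
              (∑ j : Fin N, ∑ k : Fin N, sgnR (x' j) * B j k * sgnR (x k)) ^ N) ∧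
      (∀ x x' : Fin N → Bool,
        0 ≤ (((∏ k : Fin N, sgnR (x k)) + ∏ k : Fin N, sgnR (x' k)) ^ 2 / 4) *
              (∑ j : Fin N, ∑ k : Fin N, sgnR (x' j) * B j k * sgnR (x k)) ^ N ∧
        0 ≤ (((∏ k : Fin N, sgnR (x k)) - ∏ k : Fin N, sgnR (x' k)) ^ 2 / 4) *
              (∑ j : Fin N, ∑ k : Fin N, sgnR (x' j) * B j k * sgnR (x k)) ^ N) := by
  refine ⟨?_, fun x x' => ⟨?_, ?_⟩⟩
  · have hS : ∀ a b : ℝ, (a + b) ^ 2 / 4 - (a - b) ^ 2 / 4 = a * b := fun a b => by ring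
    have hgap := sum_sum_prod_sgnR_mul_bilinear_pow B
    rw [Fintype.card_fin] at hgap
    rw [← sum_sub_distrib]
    simp_rw [← sum_sub_distrib, ← sub_mul, hS, hgap]
    field_simp
  all_goals exact mul_nonneg (by positivity) (hN.pow_nonneg _)

/-- The permanent of a real matrix of even dimension as a difference of two sums of
nonnegative terms (GapP structure), with `S±(x,x') = (Πₖ xₖ ± Πₖ x'ₖ)²/4`. -/
theorem perm_gap_formula (N : ℕ) (hN : Even N) (hN1 : 1 ≤ N) (B : Matrix (Fin N) (Fin N) ℝ) :
    permR B =
      (1 / ((N.factorial : ℝ) * 2 ^ (2 * N))) *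
        ((∑ x : Fin N → Bool, ∑ x' : Fin N → Bool,
            (((∏ k : Fin N, sgnR (x k)) + ∏ k : Fin N, sgnR (x' k)) ^ 2 / 4) *
              (∑ j : Fin N, ∑ k : Fin N, sgnR (x' j) * B j k * sgnR (x k)) ^ N) -
          ∑ x : Fin N → Bool, ∑ x' : Fin N → Bool,
            (((∏ k : Fin N, sgnR (x k)) - ∏ k : Fin N, sgnR (x' k)) ^ 2 / 4) *
              (∑ j : Fin N, ∑ k : Fin N, sgnR (x' j) * B j k * sgnR (x k)) ^ N) ∧
      (∀ x x' : Fin N → Bool,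
        0 ≤ (((∏ k : Fin N, sgnR (x k)) + ∏ k : Fin N, sgnR (x' k)) ^ 2 / 4) *
              (∑ j : Fin N, ∑ k : Fin N, sgnR (x' j) * B j k * sgnR (x k)) ^ N ∧
        0 ≤ (((∏ k : Fin N, sgnR (x k)) - ∏ k : Fin N, sgnR (x' k)) ^ 2 / 4) *
              (∑ j : Fin N, ∑ k : Fin N, sgnR (x' j) * B j k * sgnR (x k)) ^ N) :=
  perm_gap_formula_general N hN B
end

section
/- For any N×N complex matrix A = B + iC with B, C real N×N matrices, Per(A) = (1/(N! 2^{2N})) Σ_{l=0}^N i^l binom(N,l) Σ_{x,x' ∈ {-1,1}^N} (Π_{k=1}^N x_k x'_k)(x'^T B x)^{N-l}(x'^T C x)^l. -/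
open Finset BigOperators

/-!
Expand `(x'ᵀ A x) ^ n` as a sum over pairs of maps `f g : ι → ι` of
`∏ₜ x'_{f t} A_{f t, g t} x_{g t}`. Summed over all sign vectors `x`, the weight
`∏ₖ xₖ · ∏ₜ x_{g t}` vanishes as soon as some `k` is missed by `g`, and equals `2 ^ n`
when `g` is a permutation; likewise for `x'` and `f`. What survives is
`2 ^ (2n) ∑_{σ, τ} ∏ₜ A_{σ t, τ t} = 2 ^ (2n) n! Per A`. The stated form follows by
binomially expanding `(x'ᵀ B x + i x'ᵀ C x) ^ N`.
-/

open Function Fintype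

variable {R : Type*} [CommRing R]

def boolSign (b : Bool) : R := if b then 1 else -1

lemma sum_boolSign_pow (m : ℕ) : ∑ b : Bool, (boolSign b : R) ^ m = 1 + (-1) ^ m := by
  simp [boolSign]

variable {ι : Type*} [Fintype ι] [DecidableEq ι]

lemma sum_prod_boolSign_pow (c : ι → ℕ) :
    ∑ x : ι → Bool, ∏ k, (boolSign (x k) : R) ^ c k = ∏ k, (1 + (-1) ^ c k) := by
  simp only [← sum_boolSign_pow, Fintype.prod_sum]

lemma sum_prod_boolSign_mul_prod_comp (q : ι → ι) :
    ∑ x : ι → Bool, (∏ k, (boolSign (x k) : R)) * ∏ t, boolSign (x (q t)) =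
      if Bijective q then 2 ^ card ι else 0 := by
  have hfib (x : ι → Bool) : (∏ k, (boolSign (x k) : R)) * ∏ t, boolSign (x (q t)) =
      ∏ k, (boolSign (x k) : R) ^ (#{t | q t = k} + 1) := by
    rw [← Finset.prod_fiberwise' univ q fun k => (boolSign (x k) : R), ← prod_mul_distrib]
    simp [pow_succ']
  simp only [hfib, sum_prod_boolSign_pow]
  split_ifs with hq
  · have hone (k : ι) : #{t | q t = k} = 1 := by
      rw [card_eq_one]
      exact ⟨(Equiv.ofBijective q hq).symm k, by ext t; simp [Equiv.eq_symm_apply]⟩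
    simp [hone, one_add_one_eq_two]
  · obtain ⟨k, hk⟩ : ∃ k, ∀ t, q t ≠ k := by
      simpa [Surjective] using mt Finite.surjective_iff_bijective.mp hq
    refine prod_eq_zero (mem_univ k) ?_
    simp [filter_eq_empty_iff.mpr fun t _ => hk t]

lemma bilinear_pow_card_eq_sum (u v : ι → R) (A : Matrix ι ι R) :
    (∑ j, ∑ k, u j * A j k * v k) ^ card ι =
      ∑ f : ι → ι, ∑ g : ι → ι, ∏ t, u (f t) * A (f t) (g t) * v (g t) := by
  rw [← card_univ, ← prod_const, Fintype.prod_sum]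
  simp only [Fintype.prod_sum]

lemma sum_ite_bijective {M : Type*} [AddCommMonoid M] (g : (ι → ι) → M) :
    ∑ f : ι → ι, (if Bijective f then g f else 0) = ∑ σ : Equiv.Perm ι, g σ := by
  rw [← sum_filter]
  refine (sum_bij (fun (σ : Equiv.Perm ι) _ => ⇑σ) (fun σ _ => by simp)
    (fun σ _ τ _ h => Equiv.ext (congrFun h)) (fun f hf => ?_) (fun _ _ => rfl)).symm
  exact ⟨Equiv.ofBijective f (mem_filter.mp hf).2, mem_univ _, rfl⟩

lemma sum_perm_prod_apply_eq_permanent (σ : Equiv.Perm ι) (A : Matrix ι ι R) :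
    ∑ τ : Equiv.Perm ι, ∏ t, A (σ t) (τ t) = A.permanent := by
  have (τ : Equiv.Perm ι) : ∏ t, A (σ t) (τ t) = ∏ i, A ((σ * τ⁻¹) i) i := by
    rw [← Equiv.prod_comp τ (fun i => A ((σ * τ⁻¹) i) i)]
    simp
  simp only [this, Matrix.permanent]
  exact Fintype.sum_equiv ((Equiv.inv _).trans (Equiv.mulLeft σ)) _ _ fun _ => rfl

theorem glynn_kan_permanent (A : Matrix ι ι R) :
    ∑ x : ι → Bool, ∑ x' : ι → Bool, (∏ k, (boolSign (x k) : R) * boolSign (x' k)) *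
      (∑ j, ∑ k, boolSign (x' j) * A j k * boolSign (x k)) ^ card ι =
      (card ι).factorial * 2 ^ (2 * card ι) * A.permanent := by
  have hfactor (f g : ι → ι) :
      ∑ x : ι → Bool, ∑ x' : ι → Bool, (∏ k, (boolSign (x k) : R) * boolSign (x' k)) *
        ∏ t, boolSign (x' (f t)) * A (f t) (g t) * boolSign (x (g t)) =
      (∑ x' : ι → Bool, (∏ k, (boolSign (x' k) : R)) * ∏ t, boolSign (x' (f t))) *
        ((∑ x : ι → Bool, (∏ k, (boolSign (x k) : R)) * ∏ t, boolSign (x (g t))) *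
          ∏ t, A (f t) (g t)) := by
    simp only [sum_mul, mul_sum]
    refine sum_congr rfl fun x _ => sum_congr rfl fun x' _ => ?_
    simp only [prod_mul_distrib]
    ring
  calc _ = ∑ f : ι → ι, ∑ g : ι → ι, ∑ x : ι → Bool, ∑ x' : ι → Bool,
          (∏ k, (boolSign (x k) : R) * boolSign (x' k)) *
            ∏ t, boolSign (x' (f t)) * A (f t) (g t) * boolSign (x (g t)) := by
        simp only [bilinear_pow_card_eq_sum, mul_sum]
        exact (Fintype.sum_congr _ _ fun _ =>
            sum_comm.trans (Fintype.sum_congr _ _ fun _ => sum_comm)).trans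
          (sum_comm.trans (Fintype.sum_congr _ _ fun _ => sum_comm))
    _ = ∑ f : ι → ι, (if Bijective f then 2 ^ card ι else 0) *
          ∑ g : ι → ι, (if Bijective g then 2 ^ card ι else 0) * ∏ t, A (f t) (g t) := by
        simp only [hfactor, sum_prod_boolSign_mul_prod_comp, mul_sum]
    _ = ∑ σ : Equiv.Perm ι,
          2 ^ card ι * ∑ τ : Equiv.Perm ι, 2 ^ card ι * ∏ t, A (σ t) (τ t) := by
        simp only [ite_mul, zero_mul, sum_ite_bijective]
    _ = _ := by
        simp only [← mul_sum, sum_perm_prod_apply_eq_permanent, sum_const, card_univ,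
          Fintype.card_perm, nsmul_eq_mul]
        ring

lemma perm_eq_permanent (A : Matrix ι ι ℂ) : perm A = A.permanent := by
  rw [← Matrix.permanent_transpose]
  rfl

lemma ofReal_sgnR (b : Bool) : ((sgnR b : ℝ) : ℂ) = boolSign b := by
  cases b <;> simp [sgnR, boolSign]

theorem glynn_kan_complex_general (N : ℕ) (B C : Matrix (Fin N) (Fin N) ℝ)
    (A : Matrix (Fin N) (Fin N) ℂ)
    (hA : ∀ j k, A j k = (B j k : ℂ) + Complex.I * (C j k : ℂ)) :
    perm A =
      (1 / ((N.factorial : ℂ) * 2 ^ (2 * N))) *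
        ∑ l ∈ Finset.range (N + 1),
          Complex.I ^ l * (N.choose l : ℂ) *
            ∑ x : Fin N → Bool, ∑ x' : Fin N → Bool,
              ((∏ k : Fin N, (sgnR (x k) * sgnR (x' k) : ℝ)) : ℂ) *
                ((∑ j : Fin N, ∑ k : Fin N, sgnR (x' j) * B j k * sgnR (x k) : ℝ) : ℂ) ^ (N - l) *
                ((∑ j : Fin N, ∑ k : Fin N, sgnR (x' j) * C j k * sgnR (x k) : ℝ) : ℂ) ^ l := by
  have hbilinear (x x' : Fin N → Bool) :
      Complex.I * ((∑ j, ∑ k, sgnR (x' j) * C j k * sgnR (x k) : ℝ) : ℂ) +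
          ((∑ j, ∑ k, sgnR (x' j) * B j k * sgnR (x k) : ℝ) : ℂ) =
        ∑ j, ∑ k, boolSign (x' j) * A j k * boolSign (x k) := by
    push_cast [ofReal_sgnR]
    simp only [mul_sum, ← sum_add_distrib, hA]
    exact Fintype.sum_congr _ _ fun j => Fintype.sum_congr _ _ fun k => by ring
  have hglynn := glynn_kan_permanent A
  rw [Fintype.card_fin] at hglynn
  rw [perm_eq_permanent, eq_comm, one_div,
    inv_mul_eq_iff_eq_mul₀ (by simp [Nat.factorial_ne_zero]), ← hglynn]
  simp only [mul_sum]
  rw [sum_comm]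
  refine sum_congr rfl fun x _ => ?_
  rw [sum_comm]
  refine sum_congr rfl fun x' _ => ?_
  rw [← hbilinear, add_pow, mul_sum]
  push_cast [ofReal_sgnR]
  refine sum_congr rfl fun l _ => ?_
  ring

/-- The Glynn-Kan formula for a complex matrix `A = B + iC`, binomially expanded in
terms of its real and imaginary parts. -/
theorem glynn_kan_complex (N : ℕ) (hN : 1 ≤ N) (B C : Matrix (Fin N) (Fin N) ℝ)
    (A : Matrix (Fin N) (Fin N) ℂ)
    (hA : ∀ j k, A j k = (B j k : ℂ) + Complex.I * (C j k : ℂ)) :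
    perm A =
      (1 / ((N.factorial : ℂ) * 2 ^ (2 * N))) *
        ∑ l ∈ Finset.range (N + 1),
          Complex.I ^ l * (N.choose l : ℂ) *
            ∑ x : Fin N → Bool, ∑ x' : Fin N → Bool,
              ((∏ k : Fin N, (sgnR (x k) * sgnR (x' k) : ℝ)) : ℂ) *
                ((∑ j : Fin N, ∑ k : Fin N, sgnR (x' j) * B j k * sgnR (x k) : ℝ) : ℂ) ^ (N - l) *
                ((∑ j : Fin N, ∑ k : Fin N, sgnR (x' j) * C j k * sgnR (x k) : ℝ) : ℂ) ^ l :=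
  glynn_kan_complex_general N B C A hA
end
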